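/- arXiv:math/0502264 — 5 statements merged into one kernel-verified Lean document; each statement's English description precedes it below -/
import Mathlib

section
/- (Substitution property of ≺*.) Let s and t be finite sequences of ordinals, let m ∈ dom(s), and assume: dom(s) ⊆ dom(t); s and t agree on dom(s) \ {m}; t(m) < s(m); and t(i) < s(m) for every i ∈ dom(t) \ dom(s). Then t ≺* s (comparing the graphs of t and s as finite subsets of ℕ × Ordinal). -/
universe u

/-- The well-order `≺` on `ℕ × Ord`: `(m, α) ≺ (n, β)` iff `α < β`, or
`α = β` and `m < n`. -/
def precPair (x y : ℕ × Ordinal.{u}) : Prop :=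
  x.2 < y.2 ∨ (x.2 = y.2 ∧ x.1 < y.1)

/-- The canonical well-order `≺*` "by largest difference" on finite subsets of
`ℕ × Ord`: `s ≺* s'` iff there is `x ∈ s' \ s` with
`{y ∈ s | y ≻ x} = {y ∈ s' | y ≻ x}`. -/
def precStar (s s' : Finset (ℕ × Ordinal.{u})) : Prop :=
  ∃ x ∈ s', x ∉ s ∧
    {y : ℕ × Ordinal.{u} | y ∈ s ∧ precPair x y} =
    {y : ℕ × Ordinal.{u} | y ∈ s' ∧ precPair x y}

/-- The graph of a finite sequence of ordinals, given by a finite domain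
`d ⊆ ℕ` and values `f`, as a finite subset of `ℕ × Ord`. -/
noncomputable def seqGraph (d : Finset ℕ) (f : ℕ → Ordinal.{u}) : Finset (ℕ × Ordinal.{u}) :=
  d.image fun i => (i, f i)

/-- Substitution property of `≺*`: if `t` agrees with `s` except that the
value `s(m)` has been replaced by a smaller ordinal and possibly many new
values smaller than `s(m)` have been added, then `t ≺* s`. -/
theorem substitution_property
    (ds dt : Finset ℕ) (f g : ℕ → Ordinal.{u}) (m : ℕ)
    (hm : m ∈ ds) (hsub : ds ⊆ dt)
    (hagree : ∀ i ∈ ds, i ≠ m → f i = g i)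
    (hlt : g m < f m)
    (hnew : ∀ i ∈ dt, i ∉ ds → g i < f m) :
    precStar (seqGraph dt g) (seqGraph ds f) := by
  refine ⟨(m, f m), ?_, ?_, ?_⟩
  · exact Finset.mem_image.2 ⟨m, hm, rfl⟩
  · intro h
    obtain ⟨i, hi, heq⟩ := Finset.mem_image.1 h
    obtain ⟨h1, h2⟩ := Prod.mk.injEq .. ▸ heq
    subst h1
    exact absurd h2 (ne_of_lt hlt)
  · ext y
    simp only [Set.mem_setOf_eq]
    constructor
    · rintro ⟨hy, hp⟩
      obtain ⟨i, hi, rfl⟩ := Finset.mem_image.1 hy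
      have his : i ∈ ds := by
        by_contra hins
        have := hnew i hi hins
        rcases hp with h | ⟨h, _⟩
        · exact absurd h (not_lt.2 (le_of_lt this))
        · exact absurd h (ne_of_gt this)
      have him : i ≠ m := by
        rintro rfl
        rcases hp with h | ⟨h, _⟩
        · exact absurd h (not_lt.2 (le_of_lt hlt))
        · exact absurd h (ne_of_gt hlt)
      have hfg := hagree i his him
      refine ⟨Finset.mem_image.2 ⟨i, his, by rw [hfg]⟩, by rw [← hfg] at hp ⊢; exact hp⟩
    · rintro ⟨hy, hp⟩
      obtain ⟨i, hi, rfl⟩ := Finset.mem_image.1 hy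
      have him : i ≠ m := by
        rintro rfl
        rcases hp with h | ⟨_, h⟩
        · exact lt_irrefl _ h
        · exact lt_irrefl _ h
      have hfg := hagree i hi him
      exact ⟨Finset.mem_image.2 ⟨i, hsub hi, by rw [hfg]⟩, hp⟩
end

section
/- The relation ≺* is a strict well-order on the collection of all finite subsets of ℕ × Ordinal: it is irreflexive, transitive, total (for distinct finite subsets s ≠ s', either s ≺* s' or s' ≺* s), and well-founded (there is no infinite strictly ≺*-descending sequence of finite subsets of ℕ × Ordinal; equivalently, ≺* is a well-founded relation). -/
universe u

/-! A finite set `s` is recorded by its indicator function `ℕ × Ord →₀ ℕ`, and `s ≺* s'` says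
exactly that the indicator of `s'` exceeds that of `s` at the `≺`-largest point where the two
differ. So `≺*` is the colexicographic order on indicators, with the index set ordered by `≺`,
i.e. by the lexicographic order on `Ord ×ₗ ℕ` after swapping the coordinates. Colex on finitely
supported functions from a well-order to `ℕ` is a well-founded linear order, and the indicator
map is injective. -/

theorem toColex_toFinsupp_val_lt_iff {α : Type*} [LinearOrder α] (s t : Finset α) :
    toColex (Multiset.toFinsupp s.val) < toColex (Multiset.toFinsupp t.val) ↔
      ∃ a ∈ t, a ∉ s ∧ ∀ b, a < b → (b ∈ s ↔ b ∈ t) := by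
  have hcount (u : Finset α) (a : α) : Multiset.toFinsupp u.val a = if a ∈ u then 1 else 0 :=
    Multiset.count_eq_of_nodup u.nodup
  simp only [Finsupp.Colex.lt_iff, ofColex_toColex, hcount]
  refine exists_congr fun a => ?_
  have hagree : (∀ b, a < b → (if b ∈ s then 1 else 0 : ℕ) = if b ∈ t then 1 else 0) ↔
      ∀ b, a < b → (b ∈ s ↔ b ∈ t) :=
    forall₂_congr fun b _ => by split_ifs <;> simp_all
  by_cases has : a ∈ s <;> by_cases hat : a ∈ t <;> simp [has, hat, hagree]

def precKey : ℕ × Ordinal.{u} ≃ Ordinal.{u} ×ₗ ℕ :=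
  (Equiv.prodComm _ _).trans toLex

theorem precPair_iff_precKey_lt (x y : ℕ × Ordinal.{u}) :
    precPair x y ↔ precKey x < precKey y := by
  simp [precPair, precKey, Prod.Lex.toLex_lt_toLex]

theorem precStar_iff (s t : Finset (ℕ × Ordinal.{u})) :
    precStar s t ↔ ∃ x ∈ t, x ∉ s ∧ ∀ y, precPair x y → (y ∈ s ↔ y ∈ t) := by
  simp only [precStar, Set.ext_iff, Set.mem_ofPred_eq, and_congr_left_iff]

noncomputable def precStarKey (s : Finset (ℕ × Ordinal.{u})) : Colex (Ordinal.{u} ×ₗ ℕ →₀ ℕ) :=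
  toColex (Multiset.toFinsupp (s.map precKey.toEmbedding).val)

theorem precStarKey_injective : Function.Injective precStarKey.{u} :=
  toColex.injective.comp <| Multiset.toFinsupp.injective.comp <|
    Finset.val_injective.comp (Finset.map_injective _)

theorem precStar_iff_precStarKey_lt (s t : Finset (ℕ × Ordinal.{u})) :
    precStar s t ↔ precStarKey s < precStarKey t := by
  rw [precStar_iff, precStarKey, precStarKey, toColex_toFinsupp_val_lt_iff]
  refine precKey.exists_congr_left.trans (exists_congr fun a => ?_)
  simp only [Finset.mem_map_equiv, precKey.symm.forall_congr_left, precPair_iff_precKey_lt,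
    Equiv.symm_symm, Equiv.apply_symm_apply, Equiv.symm_apply_apply]

theorem precStar_eq_invImage : precStar.{u} = InvImage (· < ·) precStarKey :=
  funext₂ fun s t => propext (precStar_iff_precStarKey_lt s t)

/-- `≺*` is a strict well-order on the finite subsets of `ℕ × Ord`: it is
irreflexive, transitive, total on distinct sets, and well-founded. -/
theorem precStar_isStrictWellOrder :
    (∀ s : Finset (ℕ × Ordinal.{u}), ¬ precStar s s) ∧
    (∀ s t u : Finset (ℕ × Ordinal.{u}), precStar s t → precStar t u → precStar s u) ∧
    (∀ s t : Finset (ℕ × Ordinal.{u}), s ≠ t → precStar s t ∨ precStar t s) ∧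
    WellFounded (precStar.{u}) := by
  rw [precStar_eq_invImage]
  exact ⟨fun s => lt_irrefl (precStarKey s), fun s t u => lt_trans,
    fun s t hst => lt_or_gt_of_ne (precStarKey_injective.ne hst),
    InvImage.wf precStarKey wellFounded_lt⟩
end

section
/- There exists a function S from the ordinals to the class of finite sequences of ordinals (functions s : {0,…,k−1} → Ordinal for some k ∈ ℕ) such that: (a) S is surjective, i.e., every finite sequence of ordinals equals S(ξ) for some ordinal ξ; and (b) S is weakly increasing with respect to ≺*: whenever ξ < ζ, either S(ξ) = S(ζ) or S(ξ) ≺* S(ζ) (comparing graphs). -/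
universe u

/-- The graph of a finite sequence `s : {0, …, k−1} → Ord` of ordinals, as a
finite subset of `ℕ × Ord`. -/
noncomputable def sgraph (s : Σ k : ℕ, Fin k → Ordinal.{u}) : Finset (ℕ × Ordinal.{u}) :=
  Finset.univ.image fun i : Fin s.1 => ((i : ℕ), s.2 i)

/-!
The rank `(m, α) ↦ ω * α + m` turns `≺` into `<` on ordinals, so `≺*` on graphs becomes the
colexicographic order on finite sets of ordinals. That order is realized by the ordinal
`∑ β ∈ T, 2 ^ β` (exponents decreasing): if `w` is the largest element where `s` and `t` differ,
with `w ∈ t`, the sums agree above `w`, and below it `2 ^ w` beats every sum of smaller powers.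
The resulting rank of finite sequences is injective and unbounded, so listing its range in
increasing order gives a surjection from the ordinals along which `≺*` strictly increases.
-/

open Finset Function Ordinal

theorem Finset.Colex.toColex_image_lt_toColex_image_iff_exists_filter_lt {α β : Type*}
    [DecidableEq α] [LinearOrder β] {f : α → β} (hf : Injective f) {s t : Finset α} :
    toColex (s.image f) < toColex (t.image f) ↔
      ∃ x ∈ t \ s, {y ∈ s | f x < f y} = {y ∈ t | f x < f y} := by
  rw [Colex.lt_iff_exists_filter_lt]
  constructor
  · rintro ⟨w, hw, hfilter⟩
    obtain ⟨hwt, hws⟩ := mem_sdiff.1 hw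
    obtain ⟨x, hx, rfl⟩ := mem_image.1 hwt
    refine ⟨x, mem_sdiff.2 ⟨hx, fun h ↦ hws (mem_image_of_mem f h)⟩, ?_⟩
    rw [filter_image, filter_image] at hfilter
    exact image_injective hf hfilter
  · rintro ⟨x, hx, hfilter⟩
    obtain ⟨hxt, hxs⟩ := mem_sdiff.1 hx
    refine ⟨f x, mem_sdiff.2 ⟨mem_image_of_mem f hxt, hf.mem_finset_image.not.2 hxs⟩, ?_⟩
    rw [filter_image, filter_image, hfilter]

namespace Ordinal

theorem omega0_mul_add_natCast_strictMono :
    StrictMono fun p : Ordinal.{u} ×ₗ ℕ ↦ ω * (ofLex p).1 + (ofLex p).2 := by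
  rintro ⟨α, m⟩ ⟨β, n⟩ h
  rcases Prod.Lex.lt_iff.1 h with h | ⟨h, hmn⟩
  · calc ω * α + m < ω * (α + 1) := by
          rw [mul_add_one, add_lt_add_iff_left]; exact natCast_lt_omega0 m
      _ ≤ ω * β := mul_le_mul_right (Order.add_one_le_of_lt h) ω
      _ ≤ ω * β + n := le_self_add
  · change α = β at h
    change ω * α + m < ω * β + n
    rw [h, add_lt_add_iff_left]
    exact_mod_cast hmn

/-- `∑ β ∈ T, 2 ^ β` with the exponents in decreasing order, i.e. the ordinal whose base-`2`
Cantor normal form has digit set `T`. -/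
noncomputable def twoPowSum (T : Finset Ordinal.{u}) : Ordinal.{u} :=
  CNF.eval 2 (Finsupp.indicator T fun _ _ ↦ 1)

theorem indicator_one_apply_lt_two (T : Finset Ordinal.{u}) (e : Ordinal.{u}) :
    Finsupp.indicator T (fun _ _ ↦ (1 : Ordinal.{u})) e < 2 := by
  classical
  rw [Finsupp.indicator_apply]
  split_ifs <;> norm_num

theorem twoPowSum_union {A B : Finset Ordinal.{u}} (hAB : ∀ a ∈ A, ∀ b ∈ B, b < a) :
    twoPowSum (A ∪ B) = twoPowSum A + twoPowSum B := by
  classical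
  have hdisj : Disjoint A B := disjoint_left.2 fun a ha hb ↦ (hAB a ha a hb).false
  have hind : (Finsupp.indicator (A ∪ B) fun _ _ ↦ (1 : Ordinal.{u})) =
      Finsupp.indicator A (fun _ _ ↦ 1) + Finsupp.indicator B fun _ _ ↦ 1 := by
    ext e
    simp only [Finsupp.add_apply, Finsupp.indicator_apply, mem_union]
    by_cases hA : e ∈ A
    · simp [hA, disjoint_left.1 hdisj hA]
    · simp [hA]
  rw [twoPowSum, hind, CNF.eval_add]
  · rfl
  · exact fun a ha b hb ↦
      (hAB a (Finsupp.support_indicator_subset _ _ ha) b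
        (Finsupp.support_indicator_subset _ _ hb)).le

theorem twoPowSum_singleton (β : Ordinal.{u}) : twoPowSum {β} = 2 ^ β := by
  rw [twoPowSum, Finsupp.indicator_singleton, CNF.eval_single, mul_one]

theorem twoPowSum_lt_two_opow {T : Finset Ordinal.{u}} {β : Ordinal.{u}}
    (hT : ∀ γ ∈ T, γ < β) : twoPowSum T < 2 ^ β :=
  CNF.eval_lt (indicator_one_apply_lt_two T) fun e he ↦
    hT e (Finsupp.support_indicator_subset _ _ he)

theorem two_opow_le_twoPowSum {T : Finset Ordinal.{u}} {β : Ordinal.{u}} (hβ : β ∈ T)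
    (hT : ∀ γ ∈ T, γ ≤ β) : 2 ^ β ≤ twoPowSum T := by
  rw [← insert_erase hβ, insert_eq, twoPowSum_union, twoPowSum_singleton]
  · exact le_self_add
  · intro a ha b hb
    rw [mem_singleton.1 ha]
    exact (hT b (mem_of_mem_erase hb)).lt_of_ne (ne_of_mem_erase hb)

theorem twoPowSum_eq_add_filter (T : Finset Ordinal.{u}) (w : Ordinal.{u}) :
    twoPowSum T = twoPowSum {γ ∈ T | w < γ} + twoPowSum {γ ∈ T | ¬ w < γ} := by
  rw [← twoPowSum_union, filter_union_filter_not_eq]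
  simp only [mem_filter, not_lt]
  exact fun a ha b hb ↦ hb.2.trans_lt ha.2

theorem twoPowSum_lt_twoPowSum_of_toColex_lt {s t : Finset Ordinal.{u}}
    (hst : toColex s < toColex t) : twoPowSum s < twoPowSum t := by
  obtain ⟨w, hw, hhigh⟩ := Colex.lt_iff_exists_filter_lt.1 hst
  obtain ⟨hwt, hws⟩ := mem_sdiff.1 hw
  rw [twoPowSum_eq_add_filter s w, twoPowSum_eq_add_filter t w, hhigh, add_lt_add_iff_left]
  calc twoPowSum {γ ∈ s | ¬ w < γ} < 2 ^ w := by
        refine twoPowSum_lt_two_opow fun γ hγ ↦ ?_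
        obtain ⟨hγs, hγw⟩ := mem_filter.1 hγ
        exact (not_lt.1 hγw).lt_of_ne (ne_of_mem_of_not_mem hγs hws)
    _ ≤ twoPowSum {γ ∈ t | ¬ w < γ} :=
        two_opow_le_twoPowSum (mem_filter.2 ⟨hwt, lt_irrefl w⟩)
          fun γ hγ ↦ not_lt.1 (mem_filter.1 hγ).2

theorem twoPowSum_ofColex_strictMono :
    StrictMono fun s : Colex (Finset Ordinal.{u}) ↦ twoPowSum (ofColex s) :=
  fun _ _ ↦ twoPowSum_lt_twoPowSum_of_toColex_lt

theorem twoPowSum_lt_twoPowSum_iff {s t : Finset Ordinal.{u}} :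
    twoPowSum s < twoPowSum t ↔ toColex s < toColex t :=
  twoPowSum_ofColex_strictMono.lt_iff_lt

theorem twoPowSum_injective : Injective twoPowSum.{u} :=
  twoPowSum_ofColex_strictMono.injective

theorem exists_surjective_strictMono_comp {α : Type*} {f : α → Ordinal.{u}} (hf : Injective f)
    (hunb : ¬ BddAbove (Set.range f)) :
    ∃ S : Ordinal.{u} → α, Surjective S ∧ StrictMono (f ∘ S) := by
  choose S hS using enumOrd_mem hunb
  refine ⟨S, fun a ↦ ?_, ?_⟩
  · obtain ⟨ξ, hξ⟩ := enumOrd_surjective hunb (Set.mem_range_self a)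
    exact ⟨ξ, hf ((hS ξ).trans hξ)⟩
  · rw [show f ∘ S = enumOrd (Set.range f) from funext hS]
    exact enumOrd_strictMono hunb

end Ordinal

noncomputable def pairRank (x : ℕ × Ordinal.{u}) : Ordinal.{u} := ω * x.2 + x.1

theorem pairRank_eq_comp :
    pairRank.{u} =
      (fun p : Ordinal.{u} ×ₗ ℕ ↦ ω * (ofLex p).1 + (ofLex p).2) ∘ toLex ∘ Prod.swap :=
  rfl

theorem pairRank_lt_pairRank_iff {x y : ℕ × Ordinal.{u}} :
    pairRank x < pairRank y ↔ precPair x y :=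
  omega0_mul_add_natCast_strictMono.lt_iff_lt.trans
    (Prod.Lex.toLex_lt_toLex (x := x.swap) (y := y.swap))

theorem pairRank_injective : Injective pairRank.{u} := by
  rw [pairRank_eq_comp]
  exact omega0_mul_add_natCast_strictMono.injective.comp (toLex.injective.comp Prod.swap_injective)

theorem precStar_iff_toColex_lt {s t : Finset (ℕ × Ordinal.{u})} :
    precStar s t ↔ toColex (s.image pairRank) < toColex (t.image pairRank) := by
  classical
  simp only [Colex.toColex_image_lt_toColex_image_iff_exists_filter_lt pairRank_injective,
    pairRank_lt_pairRank_iff, precStar, mem_sdiff, Set.ext_iff, Finset.ext_iff, mem_filter,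
    Set.mem_ofPred_eq, and_assoc]

theorem card_sgraph (s : Σ k : ℕ, Fin k → Ordinal.{u}) : (sgraph s).card = s.1 := by
  rw [sgraph, card_image_of_injective _ fun i j hij ↦ Fin.ext (congrArg Prod.fst hij),
    Finset.card_univ, Fintype.card_fin]

theorem mk_mem_sgraph {s : Σ k : ℕ, Fin k → Ordinal.{u}} (i : Fin s.1) :
    ((i : ℕ), s.2 i) ∈ sgraph s :=
  mem_image_of_mem _ (mem_univ i)

theorem sgraph_injective : Injective sgraph.{u} := by
  rintro ⟨k, f⟩ ⟨l, g⟩ h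
  obtain rfl : k = l := by simpa only [card_sgraph] using congrArg Finset.card h
  suffices f = g by rw [this]
  funext i
  obtain ⟨j, -, hj⟩ := mem_image.1 (h ▸ mk_mem_sgraph (s := ⟨k, f⟩) i)
  obtain rfl := Fin.ext (congrArg Prod.fst hj)
  exact (congrArg Prod.snd hj).symm

noncomputable def seqRank (s : Σ k : ℕ, Fin k → Ordinal.{u}) : Ordinal.{u} :=
  twoPowSum ((sgraph s).image pairRank)

theorem seqRank_lt_seqRank_iff {s t : Σ k : ℕ, Fin k → Ordinal.{u}} :
    seqRank s < seqRank t ↔ precStar (sgraph s) (sgraph t) := by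
  rw [seqRank, seqRank, twoPowSum_lt_twoPowSum_iff, precStar_iff_toColex_lt]

theorem seqRank_injective : Injective seqRank.{u} := fun _ _ h ↦
  sgraph_injective (image_injective pairRank_injective (twoPowSum_injective h))

theorem not_bddAbove_range_seqRank : ¬ BddAbove (Set.range seqRank.{u}) := by
  refine not_bddAbove_iff.2 fun b ↦ ⟨_, Set.mem_range_self ⟨1, fun _ ↦ b + 1⟩, ?_⟩
  calc b < b + 1 := lt_add_one b
    _ ≤ ω * (b + 1) := le_mul_right _ omega0_pos
    _ ≤ 2 ^ (ω * (b + 1)) := right_le_opow _ one_lt_two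
    _ = seqRank ⟨1, fun _ ↦ b + 1⟩ := by simp [seqRank, sgraph, pairRank, twoPowSum_singleton]

/-- There is a surjective enumeration `S : Ord → Ord^{<ω}` of all finite
sequences of ordinals which is weakly increasing with respect to `≺*`. -/
theorem exists_precStar_monotone_enumeration :
    ∃ S : Ordinal.{u} → Σ k : ℕ, Fin k → Ordinal.{u},
      Function.Surjective S ∧
      ∀ ξ ζ : Ordinal.{u}, ξ < ζ →
        S ξ = S ζ ∨ precStar (sgraph (S ξ)) (sgraph (S ζ)) := by
  obtain ⟨S, hsurj, hmono⟩ :=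
    exists_surjective_strictMono_comp seqRank_injective not_bddAbove_range_seqRank
  exact ⟨S, hsurj, fun _ _ h ↦ Or.inr (seqRank_lt_seqRank_iff.1 (hmono h))⟩
end

section
/- (Correctness of the Find_Ordinal program.) Let P = {(0,0,0,1,0), (0,1,1,1,1), (1,0,0,0,2), (1,1,1,0,2)}. For every ordinal α, the ordinal computation by P with input the characteristic function χ_{{α}} (the tape T₀ with T₀(ξ) = 1 iff ξ = α) halts, i.e., has successor length θ = β+1; moreover the final head position is H(β) = α, the final state is S(β) = 2, and the final tape content equals χ_{{α}}. -/
attribute [local instance] Classical.propDecidable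

namespace OTM

universe u

/-- A command is a 5-tuple `(s, c, c', m, s')` with `s, s' ∈ ℕ` and
`c, c', m ∈ {0,1}` (encoded as `Bool`, with `0 = false`, `1 = true`). -/
abbrev Command : Type := ℕ × Bool × Bool × Bool × ℕ

/-- A program is a finite set of commands reacting to both possible read
symbols in every occurring state, and doing so deterministically. -/
structure Program where
  cmds : Finset Command
  total : ∀ C ∈ cmds, ∃ D ∈ cmds, D.1 = C.1 ∧ D.2.1 ≠ C.2.1
  deterministic : ∀ C ∈ cmds, ∀ D ∈ cmds, C.1 = D.1 → C.2.1 = D.2.1 → C = D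

/-- The set of program states. -/
def Program.states (P : Program) : Set ℕ := {s | ∃ C ∈ P.cmds, C.1 = s}

/-- `t` is in the domain of a computation of length `len`, where `len = none`
codes length `Ord` (the computation never stops) and `len = some θ` codes
length `θ`. -/
def inDom (len : Option Ordinal.{u}) (t : Ordinal.{u}) : Prop := ∀ θ ∈ len, t < θ

/-- The inferior limit of a `ℕ`-valued function along the ordinals approaching
`t`: the least value attained cofinally often below `t`. -/
noncomputable def natLiminf (t : Ordinal.{u}) (f : Ordinal.{u} → ℕ) : ℕ :=
  sInf {n | ∀ s < t, ∃ r, s ≤ r ∧ r < t ∧ f r = n}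

/-- The inferior limit of an ordinal-valued function `f` restricted to the
index set `A`, along the ordinals approaching `t`: the supremum over (nonempty)
tails of the infima of `f` on the tails. -/
noncomputable def ordLiminf (t : Ordinal.{u}) (A : Set Ordinal.{u}) (f : Ordinal.{u} → Ordinal.{u}) : Ordinal.{u} :=
  sSup {β | ∃ s, s < t ∧ (∃ r, r ∈ A ∧ s ≤ r ∧ r < t) ∧
      ∀ r, r ∈ A → s ≤ r → r < t → β ≤ f r}

/-- `(len, S, H, T)` is an ordinal computation by the program `P`:
`S` is the sequence of machine states, `H` the sequence of head positions and
`T` the sequence of tape contents (only their values at ordinals in the domain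
given by `len` are relevant). -/
structure IsComputation (P : Program) (len : Option Ordinal.{u})
    (S : Ordinal.{u} → ℕ) (H : Ordinal.{u} → Ordinal.{u}) (T : Ordinal.{u} → Ordinal.{u} → Bool) : Prop where
  /-- the length, if an ordinal, is a successor ordinal -/
  len_succ : ∀ θ ∈ len, ∃ β : Ordinal.{u}, θ = β + 1
  /-- the machine starts in state `0` -/
  init_S : S 0 = 0
  /-- the machine starts with head position `0` -/
  init_H : H 0 = 0
  /-- the machine stops if the machine state is not a program state -/
  halt : ∀ t, inDom len t → S t ∉ P.states → len = some (t + 1)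
  /-- execution of the unique applicable command -/
  step : ∀ t, inDom len t → S t ∈ P.states → inDom len (t + 1) ∧
      ∀ C ∈ P.cmds, C.1 = S t → C.2.1 = T t (H t) →
        (∀ ξ, T (t + 1) ξ = if ξ = H t then C.2.2.1 else T t ξ) ∧
        S (t + 1) = C.2.2.2.2 ∧
        H (t + 1) = (if C.2.2.2.1 = true then H t + 1
            else if ∃ γ, H t = γ + 1 then Ordinal.pred (H t) else 0)
  /-- at limit times the constellation is determined by inferior limits -/
  limit : ∀ t, inDom len t → Order.IsSuccLimit t →
      (∀ ξ, (T t ξ = true ↔ ∃ s < t, ∀ r, s ≤ r → r < t → T r ξ = true)) ∧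
      S t = natLiminf t S ∧
      H t = ordLiminf t {s | S s = S t} H

/-- `P : T₀ ↦ T₁` : the ordinal computation by `P` with input `T₀` stops with
final tape content `T₁`. -/
def Computes (P : Program) (T₀ T₁ : Ordinal.{u} → Bool) : Prop :=
  ∃ (β : Ordinal.{u}) (S : Ordinal.{u} → ℕ) (H : Ordinal.{u} → Ordinal.{u}) (T : Ordinal.{u} → Ordinal.{u} → Bool),
    IsComputation P (some (β + 1)) S H T ∧ T 0 = T₀ ∧ T β = T₁

/-- The characteristic function of a set of ordinals. -/
noncomputable def chi (z : Set Ordinal.{u}) : Ordinal.{u} → Bool :=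
  fun ξ => if ξ ∈ z then true else false

/-- `x` is ordinal computable from a finite set of ordinal parameters. -/
def ComputableFromFinitelyManyParams (x : Set Ordinal.{u}) : Prop :=
  ∃ (z : Finset Ordinal.{u}) (P : Program), Computes P (chi ↑z) (chi x)

end OTM

namespace OTM

/-- The `Find_Ordinal` program
`P = {(0,0,0,1,0), (0,1,1,1,1), (1,0,0,0,2), (1,1,1,0,2)}`
(bits `0`/`1` are encoded as `false`/`true`). -/
def findOrdinalProgram : Program where
  cmds := {(0, false, false, true, 0), (0, true, true, true, 1),
           (1, false, false, false, 2), (1, true, true, false, 2)}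
  total := by decide
  deterministic := by decide

end OTM

/-
Started on `χ_{{α}}`, the program walks right in state `0` over the zeros below `α`: at a limit
time `t ≤ α` the state has been `0` and the head at `r` at every time `r < t`, so the inferior
limits put the machine in state `0` with head at `t`. It reads the `1` at `α`, moves to `α + 1`
in state `1`, and steps back to `α` in the halting state `2`. Every command writes the symbol it
reads, so the tape stays `χ_{{α}}` throughout a run of length `α + 3`.
-/

namespace OTM

open Order

section Liminf

variable {t : Ordinal.{u}}

theorem natLiminf_eq_of_forall_lt {f : Ordinal.{u} → ℕ} {n : ℕ} (ht : 0 < t)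
    (hf : ∀ r < t, f r = n) : natLiminf t f = n := by
  have hset : {m | ∀ s < t, ∃ r, s ≤ r ∧ r < t ∧ f r = m} = {n} := by
    ext m
    refine ⟨fun hm => ?_, ?_⟩
    · obtain ⟨r, -, hr, rfl⟩ := hm 0 ht
      exact hf r hr
    · rintro rfl s hs
      exact ⟨s, le_rfl, hs, hf s hs⟩
  rw [natLiminf, hset, csInf_singleton]

theorem ordLiminf_eq_self (ht : IsSuccLimit t) {A : Set Ordinal.{u}}
    {f : Ordinal.{u} → Ordinal.{u}} (hA : Set.Iio t ⊆ A) (hf : ∀ r < t, f r = r) :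
    ordLiminf t A f = t := by
  have hset : {β | ∃ s, s < t ∧ (∃ r, r ∈ A ∧ s ≤ r ∧ r < t) ∧
      ∀ r, r ∈ A → s ≤ r → r < t → β ≤ f r} = Set.Iio t := by
    ext β
    refine ⟨?_, fun hβ => ⟨β, hβ, ⟨β, hA hβ, le_rfl, hβ⟩,
      fun r _ hβr hrt => (hf r hrt).ge.trans' hβr⟩⟩
    rintro ⟨s, hst, -, hall⟩
    exact ((hall s (hA hst) le_rfl hst).trans_eq (hf s hst)).trans_lt hst
  rw [ordLiminf, hset, ht.sSup_Iio]

end Liminf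

/-- The clause of `IsComputation.step` for the command `C` at time `t`. -/
def Executes (C : Command) (S : Ordinal.{u} → ℕ) (H : Ordinal.{u} → Ordinal.{u})
    (T : Ordinal.{u} → Ordinal.{u} → Bool) (t : Ordinal.{u}) : Prop :=
  (∀ ξ, T (t + 1) ξ = if ξ = H t then C.2.2.1 else T t ξ) ∧
  S (t + 1) = C.2.2.2.2 ∧
  H (t + 1) = (if C.2.2.2.1 = true then H t + 1
      else if ∃ γ, H t = γ + 1 then Ordinal.pred (H t) else 0)

theorem Program.executes_of_executes {P : Program} {S : Ordinal.{u} → ℕ}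
    {H : Ordinal.{u} → Ordinal.{u}} {T : Ordinal.{u} → Ordinal.{u} → Bool} {t : Ordinal.{u}}
    {C₀ : Command} (hC₀ : C₀ ∈ P.cmds) (hs : C₀.1 = S t) (hc : C₀.2.1 = T t (H t))
    (h : Executes C₀ S H T t) :
    ∀ C ∈ P.cmds, C.1 = S t → C.2.1 = T t (H t) → Executes C S H T t := by
  intro C hC hCs hCc
  rwa [P.deterministic C hC C₀ hC₀ (hCs.trans hs.symm) (hCc.trans hc.symm)]

theorem executes_const_tape {C : Command} {S : Ordinal.{u} → ℕ}
    {H : Ordinal.{u} → Ordinal.{u}} {T₀ : Ordinal.{u} → Bool} {t : Ordinal.{u}}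
    (hw : C.2.2.1 = T₀ (H t)) (hS : S (t + 1) = C.2.2.2.2)
    (hH : H (t + 1) = if C.2.2.2.1 = true then H t + 1
      else if ∃ γ, H t = γ + 1 then Ordinal.pred (H t) else 0) :
    Executes C S H (fun _ => T₀) t :=
  ⟨fun ξ => by rw [hw, ← Function.update_apply, Function.update_eq_self], hS, hH⟩

theorem inDom_some_add_one {β t : Ordinal.{u}} : inDom (some (β + 1)) t ↔ t ≤ β := by
  simp [inDom, Order.lt_add_one_iff]

theorem chi_singleton_self (α : Ordinal.{u}) : chi {α} α = true := by
  simp [chi]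

theorem chi_singleton_of_ne {α ξ : Ordinal.{u}} (h : ξ ≠ α) : chi {α} ξ = false := by
  simp [chi, h]

theorem mem_findOrdinalProgram_states {s : ℕ} :
    s ∈ findOrdinalProgram.states ↔ s = 0 ∨ s = 1 := by
  constructor
  · rintro ⟨C, hC, rfl⟩
    fin_cases hC <;> simp
  · rintro (rfl | rfl)
    · exact ⟨(0, false, false, true, 0), by decide, rfl⟩
    · exact ⟨(1, false, false, false, 2), by decide, rfl⟩

section Run

variable (α : Ordinal.{u})

noncomputable def findOrdinalState (t : Ordinal.{u}) : ℕ :=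
  if t ≤ α then 0 else if t = α + 1 then 1 else 2

noncomputable def findOrdinalHead (t : Ordinal.{u}) : Ordinal.{u} :=
  if t ≤ α + 1 then t else α

variable {α}

theorem findOrdinalState_of_le {t : Ordinal.{u}} (h : t ≤ α) : findOrdinalState α t = 0 :=
  if_pos h

theorem findOrdinalState_add_one : findOrdinalState α (α + 1) = 1 := by
  simp [findOrdinalState]

theorem findOrdinalState_add_one_add_one : findOrdinalState α (α + 1 + 1) = 2 := by
  have h : α < α + 1 + 1 := (lt_add_one α).trans (lt_add_one _)
  simp [findOrdinalState, h.not_ge, (lt_add_one (α + 1)).ne']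

theorem findOrdinalState_mem_states_iff {t : Ordinal.{u}} :
    findOrdinalState α t ∈ findOrdinalProgram.states ↔ t ≤ α + 1 := by
  rw [mem_findOrdinalProgram_states, findOrdinalState]
  rcases le_or_gt t α with h | h
  · simp [h, h.trans (lt_add_one α).le]
  · rw [if_neg h.not_ge, le_iff_lt_or_eq, Order.lt_add_one_iff]
    split_ifs with h' <;> simp [h', h.not_ge]

theorem findOrdinalHead_of_le {t : Ordinal.{u}} (h : t ≤ α + 1) : findOrdinalHead α t = t :=
  if_pos h

theorem findOrdinalHead_add_one_add_one : findOrdinalHead α (α + 1 + 1) = α := by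
  simp [findOrdinalHead]

theorem executes_findOrdinal_of_lt {t : Ordinal.{u}} (h : t < α) :
    Executes (0, false, false, true, 0) (findOrdinalState α) (findOrdinalHead α)
      (fun _ => chi {α}) t := by
  have hH : findOrdinalHead α t = t := findOrdinalHead_of_le (h.le.trans (lt_add_one α).le)
  have hsucc : t + 1 ≤ α := Order.add_one_le_iff.2 h
  refine executes_const_tape (by rw [hH, chi_singleton_of_ne h.ne])
    (findOrdinalState_of_le hsucc) ?_
  simp [hH, findOrdinalHead_of_le (hsucc.trans (lt_add_one α).le)]

theorem executes_findOrdinal_self :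
    Executes (0, true, true, true, 1) (findOrdinalState α) (findOrdinalHead α)
      (fun _ => chi {α}) α := by
  have hH : findOrdinalHead α α = α := findOrdinalHead_of_le (lt_add_one α).le
  refine executes_const_tape (by rw [hH, chi_singleton_self]) findOrdinalState_add_one ?_
  simp [hH, findOrdinalHead_of_le (le_refl (α + 1))]

theorem executes_findOrdinal_add_one :
    Executes (1, false, false, false, 2) (findOrdinalState α) (findOrdinalHead α)
      (fun _ => chi {α}) (α + 1) := by
  have hH : findOrdinalHead α (α + 1) = α + 1 := findOrdinalHead_of_le le_rfl
  refine executes_const_tape (by rw [hH, chi_singleton_of_ne (lt_add_one α).ne'])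
    findOrdinalState_add_one_add_one ?_
  simp [hH, findOrdinalHead_add_one_add_one]

theorem findOrdinal_step {t : Ordinal.{u}} (ht : t ≤ α + 1) :
    ∀ C ∈ findOrdinalProgram.cmds, C.1 = findOrdinalState α t →
      C.2.1 = chi {α} (findOrdinalHead α t) →
      Executes C (findOrdinalState α) (findOrdinalHead α) (fun _ => chi {α}) t := by
  obtain h | h | h : t < α ∨ t = α ∨ t = α + 1 := by
    rw [le_iff_lt_or_eq, Order.lt_add_one_iff, le_iff_lt_or_eq, or_assoc] at ht
    exact ht
  · refine Program.executes_of_executes (by decide) (findOrdinalState_of_le h.le).symm ?_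
      (executes_findOrdinal_of_lt h)
    rw [findOrdinalHead_of_le (h.le.trans (lt_add_one α).le), chi_singleton_of_ne h.ne]
  · subst t
    refine Program.executes_of_executes (by decide) (findOrdinalState_of_le le_rfl).symm ?_
      executes_findOrdinal_self
    rw [findOrdinalHead_of_le (lt_add_one α).le, chi_singleton_self]
  · subst t
    refine Program.executes_of_executes (by decide) findOrdinalState_add_one.symm ?_
      executes_findOrdinal_add_one
    rw [findOrdinalHead_of_le le_rfl, chi_singleton_of_ne (lt_add_one α).ne']

theorem findOrdinal_limit {t : Ordinal.{u}} (ht : IsSuccLimit t) (htα : t ≤ α) :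
    (∀ ξ, (chi {α} ξ = true ↔ ∃ s < t, ∀ r, s ≤ r → r < t → chi {α} ξ = true)) ∧
      findOrdinalState α t = natLiminf t (findOrdinalState α) ∧
      findOrdinalHead α t =
        ordLiminf t {s | findOrdinalState α s = findOrdinalState α t} (findOrdinalHead α) := by
  have hstate : ∀ r < t, findOrdinalState α r = 0 := fun r hr =>
    findOrdinalState_of_le (hr.le.trans htα)
  refine ⟨fun ξ => ⟨fun h => ⟨0, ht.bot_lt, fun _ _ _ => h⟩,
    fun ⟨s, hs, h⟩ => h s le_rfl hs⟩, ?_, ?_⟩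
  · rw [findOrdinalState_of_le htα, natLiminf_eq_of_forall_lt ht.bot_lt hstate]
  · rw [findOrdinalHead_of_le (htα.trans (lt_add_one α).le)]
    refine (ordLiminf_eq_self ht (fun r hr => ?_) fun r hr => ?_).symm
    · rw [Set.mem_ofPred_eq, hstate r hr, findOrdinalState_of_le htα]
    · exact findOrdinalHead_of_le (hr.le.trans (htα.trans (lt_add_one α).le))

variable (α) in
theorem isComputation_findOrdinal :
    IsComputation findOrdinalProgram (some (α + 1 + 1 + 1)) (findOrdinalState α)
      (findOrdinalHead α) (fun _ => chi {α}) where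
  len_succ _ hθ := ⟨_, (Option.mem_some_iff.1 hθ).symm⟩
  init_S := findOrdinalState_of_le zero_le
  init_H := findOrdinalHead_of_le zero_le
  halt t ht hS := by
    rw [inDom_some_add_one] at ht
    rw [findOrdinalState_mem_states_iff, not_le, ← Order.add_one_le_iff] at hS
    rw [le_antisymm ht hS]
  step t _ hS := by
    rw [findOrdinalState_mem_states_iff] at hS
    exact ⟨inDom_some_add_one.2 (add_le_add_left hS 1), findOrdinal_step hS⟩
  limit t ht hlim := by
    rw [inDom_some_add_one, ← succ_eq_add_one, ← succ_eq_add_one, hlim.le_succ_iff,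
      hlim.le_succ_iff] at ht
    exact findOrdinal_limit hlim ht

end Run

end OTM

open OTM in
/-- Correctness of the `Find_Ordinal` program: for every ordinal `α`, the
ordinal computation by it with input `χ_{{α}}` halts, with final head position
`α`, final state `2` and final tape content `χ_{{α}}`. -/
theorem findOrdinalProgram_correct (α : Ordinal.{u}) :
    ∃ (β : Ordinal.{u}) (S : Ordinal.{u} → ℕ) (H : Ordinal.{u} → Ordinal.{u})
      (T : Ordinal.{u} → Ordinal.{u} → Bool),
      IsComputation findOrdinalProgram (some (β + 1)) S H T ∧
      T 0 = chi {α} ∧ H β = α ∧ S β = 2 ∧ T β = chi {α} :=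
  ⟨α + 1 + 1, findOrdinalState α, findOrdinalHead α, fun _ => chi {α},
    isComputation_findOrdinal α, rfl, findOrdinalHead_add_one_add_one,
    findOrdinalState_add_one_add_one, rfl⟩
end

section
/- (Ordinal comparison is ordinal computable.) There exist a program P and pairwise distinct natural numbers n₁, n₂, n₃, none of which belongs to states(P), such that for all ordinals α and β the following holds. Code the pair (α,β) on two interleaved tracks of a single tape: let T₀ : Ordinal → {0,1} be given by T₀(2·ξ) = 1 iff ξ = α and T₀(2·ξ + 1) = 1 iff ξ = β (here 2·ξ denotes the ordinal product, ξ copies of 2, so every ordinal is uniquely of the form 2·ξ + i with i < 2). Then the ordinal computation by P with input T₀ halts with length θ = γ+1, and the final state satisfies: S(γ) = n₁ if α > β, S(γ) = n₂ if α = β, and S(γ) = n₃ if α < β. -/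
attribute [local instance] Classical.propDecidable

/-!
The comparator scans the tape from left to right without changing it, so that the head is at
cell `t` at time `t`, and it keeps the parity of `t` in its state (`0` or `1`). At a limit time
both states occur cofinally, so the liminf rules put the machine into state `0` with the head at
the limit, which is even: the scan passes through limits undisturbed. The first `1` is met at
`μ = min (2 * α) (2 * β + 1)`; its parity decides whether `α ≤ β`, and if so the next cell
`2 * α + 1` holds a `1` exactly when `α = β`.
-/

namespace Ordinal

theorem mod_two_eq_zero_or_one (t : Ordinal) : t % 2 = 0 ∨ t % 2 = 1 := by
  have h : t % 2 < 1 + 1 := by rw [one_add_one_eq_two]; exact mod_lt t two_ne_zero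
  rw [Order.lt_add_one_iff, Order.le_one_iff] at h
  exact h

theorem two_mul_add_one_mod_two (q : Ordinal) : (2 * q + 1) % 2 = 1 := by
  rw [mul_add_mod_self]
  exact mod_eq_of_lt one_lt_two

theorem add_one_mod_two_of_eq_zero {t : Ordinal} (h : t % 2 = 0) : (t + 1) % 2 = 1 := by
  rw [← div_add_mod t 2, h, add_zero, two_mul_add_one_mod_two]

theorem add_one_mod_two_of_eq_one {t : Ordinal} (h : t % 2 = 1) : (t + 1) % 2 = 0 := by
  rw [← div_add_mod t 2, h, add_assoc, one_add_one_eq_two, ← mul_add_one, mul_mod]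

theorem _root_.Order.IsSuccLimit.mod_two_eq_zero {t : Ordinal} (ht : Order.IsSuccLimit t) :
    t % 2 = 0 := by
  refine (mod_two_eq_zero_or_one t).resolve_right fun h => ?_
  rw [← div_add_mod t 2, h] at ht
  exact Order.not_isSuccLimit_add_one _ ht

theorem two_mul_lt_two_mul_add_one {α β : Ordinal} (h : α ≤ β) : 2 * α < 2 * β + 1 :=
  Order.lt_add_one_iff.2 ((mul_le_mul_iff_right₀ two_pos).2 h)

theorem two_mul_add_one_lt_two_mul {α β : Ordinal} (h : β < α) : 2 * β + 1 < 2 * α :=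
  calc 2 * β + 1 < 2 * β + 2 := add_lt_add_right one_lt_two _
    _ = 2 * (β + 1) := by rw [mul_add_one]
    _ ≤ 2 * α := (mul_le_mul_iff_right₀ two_pos).2 (Order.add_one_le_iff.2 h)

theorem _root_.Order.IsSuccLimit.exists_mod_two_eq_zero_between {t s : Ordinal}
    (ht : Order.IsSuccLimit t) (hs : s < t) : ∃ r, s ≤ r ∧ r < t ∧ r % 2 = 0 := by
  rcases mod_two_eq_zero_or_one s with h | h
  · exact ⟨s, le_rfl, hs, h⟩
  · exact ⟨s + 1, (lt_add_one s).le, ht.add_one_lt hs, add_one_mod_two_of_eq_one h⟩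

theorem _root_.Order.IsSuccLimit.le_of_le_add_one {t a : Ordinal} (ht : Order.IsSuccLimit t)
    (h : t ≤ a + 1) : t ≤ a :=
  Order.lt_add_one_iff.1 <| h.lt_of_ne <| by rintro rfl; exact Order.not_isSuccLimit_add_one a ht

end Ordinal

namespace OTM

open Ordinal

theorem inDom_some_add_one_iff {γ t : Ordinal} : inDom (some (γ + 1)) t ↔ t ≤ γ := by
  simp [inDom, Order.lt_add_one_iff]

theorem natLiminf_eq_zero {t : Ordinal} {f : Ordinal → ℕ}
    (h : ∀ s < t, ∃ r, s ≤ r ∧ r < t ∧ f r = 0) : natLiminf t f = 0 :=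
  Nat.eq_zero_of_le_zero (Nat.sInf_le h)

theorem ordLiminf_id_of_cofinal {t : Ordinal} (ht : Order.IsSuccLimit t) {A : Set Ordinal}
    (hA : ∀ s < t, ∃ r ∈ A, s ≤ r ∧ r < t) : ordLiminf t A id = t := by
  refine IsLUB.csSup_eq ⟨?_, fun b hb => ?_⟩ ⟨0, 0, ht.pos, hA 0 ht.pos, fun _ _ h _ => h⟩
  · rintro β ⟨s, -, ⟨r, hr, hsr, hrt⟩, hle⟩
    exact ((hle r hr hsr hrt).trans_lt hrt).le
  · refine le_of_forall_lt fun c hc => (lt_add_one c).trans_le (hb ?_)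
    exact ⟨c + 1, ht.add_one_lt hc, hA _ (ht.add_one_lt hc), fun _ _ h _ => h⟩

theorem isComputation_of_scan {P : Program} {T₀ : Ordinal → Bool} {γ : Ordinal}
    {S : Ordinal → ℕ} (hS₀ : S 0 = 0)
    (hstep : ∀ t < γ, (S t, T₀ t, T₀ t, true, S (t + 1)) ∈ P.cmds)
    (hhalt : S γ ∉ P.states)
    (hlimit : ∀ t ≤ γ, Order.IsSuccLimit t → S t = 0 ∧ ∀ s < t, ∃ r, s ≤ r ∧ r < t ∧ S r = 0) :
    IsComputation P (some (γ + 1)) S id (fun _ => T₀) where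
  len_succ _ hθ := ⟨γ, (Option.some_inj.1 hθ).symm⟩
  init_S := hS₀
  init_H := rfl
  halt t ht hS := by
    obtain rfl : t = γ := (inDom_some_add_one_iff.1 ht).eq_of_not_lt
      fun hlt => hS ⟨_, hstep t hlt, rfl⟩
    rfl
  step t ht hS := by
    have hlt : t < γ := (inDom_some_add_one_iff.1 ht).lt_of_ne <| by rintro rfl; exact hhalt hS
    refine ⟨inDom_some_add_one_iff.2 (Order.add_one_le_iff.2 hlt), fun C hC hs hc => ?_⟩
    obtain rfl := P.deterministic C hC _ (hstep t hlt) hs hc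
    exact ⟨fun ξ => by split_ifs with h <;> simp [h], rfl, by simp⟩
  limit t ht hlim := by
    obtain ⟨h0, hcof⟩ := hlimit t (inDom_some_add_one_iff.1 ht) hlim
    refine ⟨fun ξ => ⟨fun h => ⟨0, hlim.pos, fun _ _ _ => h⟩, fun ⟨s, hs, h⟩ => h s le_rfl hs⟩,
      by rw [h0, natLiminf_eq_zero hcof], (ordLiminf_id_of_cofinal hlim fun s hs => ?_).symm⟩
    obtain ⟨r, hsr, hrt, hr⟩ := hcof s hs
    exact ⟨r, by simp [hr, h0], hsr, hrt⟩

/-- States `0`/`1`: scanning an even/odd cell; `2`/`6`: the first `1` was at an even/odd cell;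
halting states `3`, `4`, `5`: `β < α`, `α = β`, `α < β`. -/
def comparator : Program where
  cmds := {(0, false, false, true, 1), (1, false, false, true, 0),
           (0, true, true, true, 2), (1, true, true, true, 6),
           (2, false, false, true, 5), (2, true, true, true, 4),
           (6, false, false, true, 3), (6, true, true, true, 3)}
  total := by decide
  deterministic := by decide

theorem comparator_states : comparator.states = {0, 1, 2, 6} := by
  ext s
  simp [Program.states, comparator]
  tauto

/-- The state sequence of `comparator` on a tape whose first `1` is at cell `μ`. -/
noncomputable def comparatorRun (T₀ : Ordinal → Bool) (μ t : Ordinal) : ℕ :=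
  if t ≤ μ then (if t % 2 = 0 then 0 else 1)
  else if t = μ + 1 then (if μ % 2 = 0 then 2 else 6)
  else if μ % 2 = 0 then (if T₀ (μ + 1) then 4 else 5) else 3

section comparatorRun

variable {T₀ : Ordinal → Bool} {μ : Ordinal}

theorem comparatorRun_of_le {t : Ordinal} (h : t ≤ μ) :
    comparatorRun T₀ μ t = if t % 2 = 0 then 0 else 1 :=
  if_pos h

theorem comparatorRun_add_one : comparatorRun T₀ μ (μ + 1) = if μ % 2 = 0 then 2 else 6 := by
  simp only [comparatorRun, if_neg (not_le.2 (lt_add_one μ)), if_true]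

theorem comparatorRun_add_one_add_one :
    comparatorRun T₀ μ (μ + 1 + 1) = if μ % 2 = 0 then (if T₀ (μ + 1) then 4 else 5) else 3 := by
  have hμ₂ : ¬μ + 1 + 1 ≤ μ := not_le.2 ((lt_add_one μ).trans (lt_add_one _))
  simp only [comparatorRun, if_neg hμ₂, if_neg (lt_add_one (μ + 1)).ne']

theorem comparator_isComputation (hbelow : ∀ t < μ, T₀ t = false) (hμ : T₀ μ = true) :
    IsComputation comparator (some (μ + 1 + 1 + 1)) (comparatorRun T₀ μ) id (fun _ => T₀) := by
  refine isComputation_of_scan (by simp [comparatorRun]) (fun t ht => ?_) ?_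
    (fun t ht hlim => ?_)
  · rcases (Order.lt_add_one_iff.1 ht).lt_or_eq with ht | rfl
    · rcases (Order.lt_add_one_iff.1 ht).lt_or_eq with ht | ht
      · rw [comparatorRun_of_le ht.le, comparatorRun_of_le (Order.add_one_le_iff.2 ht), hbelow t ht]
        rcases mod_two_eq_zero_or_one t with h | h
        · simp [h, add_one_mod_two_of_eq_zero h, comparator]
        · simp [h, add_one_mod_two_of_eq_one h, comparator]
      · subst t
        rw [comparatorRun_of_le le_rfl, comparatorRun_add_one, hμ]
        rcases mod_two_eq_zero_or_one μ with h | h <;> simp [h, comparator]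
    · rw [comparatorRun_add_one, comparatorRun_add_one_add_one]
      rcases mod_two_eq_zero_or_one μ with h | h <;> cases T₀ (μ + 1) <;> simp [h, comparator]
  · rw [comparator_states, comparatorRun_add_one_add_one]
    split_ifs <;> simp
  · have htμ : t ≤ μ := hlim.le_of_le_add_one (hlim.le_of_le_add_one ht)
    refine ⟨by simp [comparatorRun_of_le htμ, hlim.mod_two_eq_zero], fun s hs => ?_⟩
    obtain ⟨r, hsr, hrt, hr⟩ := hlim.exists_mod_two_eq_zero_between hs
    exact ⟨r, hsr, hrt, by simp [comparatorRun_of_le (hrt.le.trans htμ), hr]⟩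

end comparatorRun

end OTM

open OTM in
/-- Ordinal comparison is ordinal computable: there are a program `P` and
pairwise distinct naturals `n₁, n₂, n₃` outside `states(P)` such that on the
input tape coding `(α, β)` on two interleaved tracks (a `1` at `2·α` on track
`0`, a `1` at `2·β + 1` on track `1`, and `0` everywhere else), the
computation by `P` halts, with final state `n₁` if `α > β`, `n₂` if `α = β`,
and `n₃` if `α < β`. -/
theorem ordinal_comparison_computable :
    ∃ (P : Program) (n₁ n₂ n₃ : ℕ),
      n₁ ≠ n₂ ∧ n₁ ≠ n₃ ∧ n₂ ≠ n₃ ∧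
      n₁ ∉ P.states ∧ n₂ ∉ P.states ∧ n₃ ∉ P.states ∧
      ∀ α β : Ordinal.{u},
        ∃ (γ : Ordinal.{u}) (S : Ordinal.{u} → ℕ) (H : Ordinal.{u} → Ordinal.{u})
          (T : Ordinal.{u} → Ordinal.{u} → Bool),
          IsComputation P (some (γ + 1)) S H T ∧
          T 0 = chi {2 * α, 2 * β + 1} ∧
          (β < α → S γ = n₁) ∧ (α = β → S γ = n₂) ∧ (α < β → S γ = n₃) := by
  refine ⟨comparator, 3, 4, 5, by decide, by decide, by decide, by simp [comparator_states],
    by simp [comparator_states], by simp [comparator_states], fun α β => ?_⟩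
  set T₀ := chi {2 * α, 2 * β + 1}
  have hbelow : ∀ t, t < 2 * α → t < 2 * β + 1 → T₀ t = false := fun t h₁ h₂ => by
    simp [T₀, chi, h₁.ne, h₂.ne]
  rcases le_or_gt α β with hle | hlt
  · have hμ : 2 * α < 2 * β + 1 := Ordinal.two_mul_lt_two_mul_add_one hle
    refine ⟨_, _, _, _, comparator_isComputation (fun t ht => hbelow t ht (ht.trans hμ))
      (by simp [T₀, chi]), rfl, ?_⟩
    have hread : T₀ (2 * α + 1) = decide (α = β) := by
      simp [T₀, chi, (lt_add_one (2 * α)).ne', Order.add_one_inj]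
    simp only [comparatorRun_add_one_add_one, Ordinal.mul_mod, if_true, hread]
    exact ⟨fun h => absurd h (not_lt.2 hle), fun h => by simp [h], fun h => by simp [h.ne]⟩
  · have hμ : 2 * β + 1 < 2 * α := Ordinal.two_mul_add_one_lt_two_mul hlt
    refine ⟨_, _, _, _, comparator_isComputation (fun t ht => hbelow t (ht.trans hμ) ht)
      (by simp [T₀, chi]), rfl, ?_⟩
    simp only [comparatorRun_add_one_add_one, Ordinal.two_mul_add_one_mod_two, one_ne_zero, if_false]
    exact ⟨fun _ => trivial, fun h => absurd h hlt.ne', fun h => absurd h (lt_asymm hlt)⟩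
end
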